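/- arXiv:2011.12163 — 5 statements merged into one kernel-verified Lean document; each statement's English description precedes it below -/
import Mathlib

section
/- Let W be a wheel with outer cycle v₁v₂⋯v_kv₁ and hub vertex v joined to all vᵢ, with any orientation and any φ: E(W) → ℤ₅. Assume each outer vertex vᵢ has a list Lᵢ of at least three available colors and the hub has all five colors available. Then W has a proper (ℤ₅, φ)-coloring respecting the lists. -/
namespace Stmt8Aux

/-- Pick an element of a finset of `ZMod 5` (its min if nonempty). -/
noncomputable def pick (s : Finset (ZMod 5)) : ZMod 5 :=
  if h : s.Nonempty then h.choose else 0

lemma pick_mem {s : Finset (ZMod 5)} (h : s.Nonempty) : pick s ∈ s := by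
  rw [pick, dif_pos h]; exact h.choose_spec

lemma nonempty_of_card_le {s : Finset (ZMod 5)} {n : ℕ} (hn : 0 < n) (h : n ≤ s.card) :
    s.Nonempty := Finset.card_pos.mp (lt_of_lt_of_le hn h)

/-- Greedy coloring along the path `1, 2, 3, …` : each value is chosen in `M n`
avoiding the forbidden value coming from the previous vertex. -/
noncomputable def f (M : ℕ → Finset (ZMod 5)) (δ : ℕ → ZMod 5) : ℕ → ZMod 5
  | 0 => 0
  | 1 => pick (M 1)
  | (n+2) => pick (M (n+2) \ {f M δ (n+1) + δ (n+1)})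

lemma sdiff_singleton_nonempty {s : Finset (ZMod 5)} (h : 2 ≤ s.card) (x : ZMod 5) :
    (s \ {x}).Nonempty := by
  apply nonempty_of_card_le (n := 1) one_pos
  have := Finset.le_card_sdiff {x} s
  simp only [Finset.card_singleton] at this
  omega

lemma f_mem (M : ℕ → Finset (ZMod 5)) (δ : ℕ → ZMod 5) (hM : ∀ n, 2 ≤ (M n).card) :
    ∀ n, f M δ (n+1) ∈ M (n+1) := by
  intro n
  cases n with
  | zero => exact pick_mem (nonempty_of_card_le two_pos (hM 1))
  | succ m =>
      have := pick_mem (sdiff_singleton_nonempty (hM (m+2)) (f M δ (m+1) + δ (m+1)))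
      rw [Finset.mem_sdiff] at this
      show f M δ (m+2) ∈ M (m+2)
      rw [f]
      exact this.1

lemma f_step (M : ℕ → Finset (ZMod 5)) (δ : ℕ → ZMod 5) (hM : ∀ n, 2 ≤ (M n).card) :
    ∀ n, f M δ (n+2) ≠ f M δ (n+1) + δ (n+1) := by
  intro n
  have := pick_mem (sdiff_singleton_nonempty (hM (n+2)) (f M δ (n+1) + δ (n+1)))
  rw [Finset.mem_sdiff, Finset.mem_singleton] at this
  rw [f]
  exact this.2

end Stmt8Aux

open Stmt8Aux in
/-- Let `W` be a wheel: outer cycle on vertices `ZMod k` (`k ≥ 3`, edge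
`i — i+1` oriented by `o i` with label `φc i`) plus a hub adjacent to every outer vertex
(spoke at `i` oriented by `os i` with label `φs i`).  If every outer vertex `i` has a list
`L i` of at least three available colors (and the hub has all five colors available), then
`W` has a proper `(ℤ₅, φ)`-coloring respecting the lists. -/
theorem stmt8 (k : ℕ) (hk : 3 ≤ k)
    (o : ZMod k → Bool) (φc : ZMod k → ZMod 5)
    (os : ZMod k → Bool) (φs : ZMod k → ZMod 5)
    (L : ZMod k → Finset (ZMod 5)) (hL : ∀ i, 3 ≤ (L i).card) :
    ∃ (c : ZMod k → ZMod 5) (h : ZMod 5),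
      (∀ i, c i ∈ L i) ∧
      (∀ i, if o i then c (i + 1) - c i ≠ φc i else c i - c (i + 1) ≠ φc i) ∧
      (∀ i, if os i then c i - h ≠ φs i else h - c i ≠ φs i) := by
  haveI : NeZero k := ⟨by omega⟩
  haveI : Fact (1 < k) := ⟨by omega⟩
  -- forbidden difference along cycle edge `i → i+1`, and spoke shift
  set δZ : ZMod k → ZMod 5 := fun i => if o i then φc i else -φc i with hδZ
  set t : ZMod k → ZMod 5 := fun i => if os i then -φs i else φs i with ht
  -- choose a color `x` such that `L 0 \ {x}` still has ≥ 3 colors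
  obtain ⟨x, hx⟩ : ∃ x, 3 ≤ (L (0 : ZMod k) \ {x}).card := by
    rcases (L (0 : ZMod k))ᶜ.eq_empty_or_nonempty with hc | ⟨x, hxm⟩
    · refine ⟨0, ?_⟩
      have hLu : L (0 : ZMod k) = Finset.univ := by
        have := Finset.compl_eq_empty_iff (L (0 : ZMod k))
        tauto
      have h1 : (Finset.univ : Finset (ZMod 5)).card = 5 := by simp
      have := Finset.le_card_sdiff ({0} : Finset (ZMod 5)) (L (0 : ZMod k))
      simp only [Finset.card_singleton] at this
      rw [hLu] at this ⊢
      omega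
    · refine ⟨x, ?_⟩
      rw [Finset.sdiff_singleton_eq_erase, Finset.erase_eq_of_notMem (by simpa using hxm)]
      exact hL 0
  -- hub color
  set h : ZMod 5 := x + t 0 with hh
  -- reduced lists
  set M : ZMod k → Finset (ZMod 5) := fun i => L i \ {h - t i} with hM
  have hM2 : ∀ i, 2 ≤ (M i).card := by
    intro i
    have := Finset.le_card_sdiff ({h - t i} : Finset (ZMod 5)) (L i)
    simp only [Finset.card_singleton] at this
    have := hL i
    simp only [hM]
    omega
  have hM0 : 3 ≤ (M (0 : ZMod k)).card := by
    have : h - t 0 = x := by rw [hh]; ring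
    simp only [hM, this]; exact hx
  -- naturals versions
  set Mn : ℕ → Finset (ZMod 5) := fun n => M (n : ZMod k) with hMn
  set δn : ℕ → ZMod 5 := fun n => δZ (n : ZMod k) with hδn
  have hMn2 : ∀ n, 2 ≤ (Mn n).card := fun n => hM2 _
  set F : ℕ → ZMod 5 := f Mn δn with hF
  -- color vertex 0 last, avoiding both neighbors
  set S : Finset (ZMod 5) := M 0 \ {F (k-1) + δn (k-1), F 1 - δn 0} with hS
  have hSne : S.Nonempty := by
    apply nonempty_of_card_le (n := 1) one_pos
    have h1 := Finset.le_card_sdiff ({F (k-1) + δn (k-1), F 1 - δn 0} : Finset (ZMod 5)) (M 0)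
    have h2 : ({F (k-1) + δn (k-1), F 1 - δn 0} : Finset (ZMod 5)).card ≤ 2 :=
      Finset.card_insert_le _ _ |>.trans (by simp)
    simp only [hS]
    omega
  set c0 : ZMod 5 := pick S with hc0
  have hc0S : c0 ∈ S := pick_mem hSne
  rw [hS, Finset.mem_sdiff, Finset.mem_insert, Finset.mem_singleton] at hc0S
  obtain ⟨hc0M, hc0f⟩ := hc0S
  push_neg at hc0f
  obtain ⟨hc0a, hc0b⟩ := hc0f
  -- the coloring
  set c : ZMod k → ZMod 5 := fun i => if i = 0 then c0 else F i.val with hc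
  -- basic ZMod facts
  have hval : ∀ i : ZMod k, ((i.val : ℕ) : ZMod k) = i := fun i => ZMod.natCast_rightInverse i
  have hvpos : ∀ i : ZMod k, i ≠ 0 → 1 ≤ i.val := by
    intro i hi
    have := (ZMod.val_eq_zero i).not.mpr hi
    omega
  have hvlt : ∀ i : ZMod k, i.val < k := fun i => ZMod.val_lt i
  have hone : (1 : ZMod k) ≠ 0 := one_ne_zero
  have hvone : (1 : ZMod k).val = 1 := ZMod.val_one k
  -- membership in M
  have hmemM : ∀ i, c i ∈ M i := by
    intro i
    by_cases hi : i = 0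
    · subst hi; simpa [hc] using hc0M
    · have h1 := hvpos i hi
      obtain ⟨m, hm⟩ : ∃ m, i.val = m + 1 := ⟨i.val - 1, by omega⟩
      have := f_mem Mn δn hMn2 m
      rw [← hm] at this
      simp only [hc, if_neg hi]
      have : F i.val ∈ M ((i.val : ℕ) : ZMod k) := this
      rwa [hval i] at this
  -- cycle step
  have hstep : ∀ i : ZMod k, c (i + 1) ≠ c i + δZ i := by
    intro i
    by_cases hi : i = 0
    · subst hi
      have hδ0 : δn 0 = δZ 0 := by simp [hδn]
      have hc1 : c (0 + 1) = F 1 := by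
        simp only [hc, zero_add, if_neg hone, hvone]
      rw [hc1]
      simp only [hc, if_pos rfl]
      intro hEq
      apply hc0b
      rw [← hδ0] at hEq
      linear_combination -hEq
    · by_cases hlast : i.val = k - 1
      · -- i + 1 = 0
        have hi1 : i + 1 = 0 := by
          have hik : i = ((k - 1 : ℕ) : ZMod k) := by rw [← hval i, hlast]
          have hcast : ((k - 1 : ℕ) : ZMod k) + 1 = ((k - 1 + 1 : ℕ) : ZMod k) := by
            push_cast; ring
          rw [hik, hcast, Nat.sub_add_cancel (by omega), ZMod.natCast_self]
        have hδi : δn (k-1) = δZ i := by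
          simp only [hδn]
          congr 1
          rw [← hlast, hval i]
        rw [hi1]
        simp only [hc, if_pos rfl, if_neg hi]
        rw [hlast, ← hδi] at *
        intro hEq
        exact hc0a hEq
      · -- interior step
        have h1 := hvpos i hi
        have h2 := hvlt i
        have hv1 : (i + 1).val = i.val + 1 := by
          have : i + 1 = ((i.val + 1 : ℕ) : ZMod k) := by
            rw [Nat.cast_add, hval i, Nat.cast_one]
          rw [this, ZMod.val_cast_of_lt (by omega)]
        have hi1 : i + 1 ≠ 0 := by
          intro hEq
          have : (i + 1).val = 0 := by rw [hEq, ZMod.val_zero]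
          omega
        simp only [hc, if_neg hi, if_neg hi1, hv1]
        obtain ⟨m, hm⟩ : ∃ m, i.val = m + 1 := ⟨i.val - 1, by omega⟩
        have hδi : δn i.val = δZ i := by simp only [hδn, hval i]
        rw [← hδi, hm]
        exact f_step Mn δn hMn2 m
  -- assemble
  refine ⟨c, h, ?_, ?_, ?_⟩
  · intro i
    have := hmemM i
    rw [hM, Finset.mem_sdiff] at this
    exact this.1
  · intro i
    have hne := hstep i
    by_cases ho : o i
    · simp only [ho, if_true]
      intro hEq
      apply hne
      simp only [hδZ, ho, if_true]
      linear_combination hEq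
    · simp only [ho, if_false]
      intro hEq
      apply hne
      simp only [hδZ, ho]
      simp only [Bool.false_eq_true, if_false]
      linear_combination -hEq
  · intro i
    have hne : c i ≠ h - t i := by
      have := hmemM i
      rw [hM, Finset.mem_sdiff, Finset.mem_singleton] at this
      exact this.2
    by_cases hos : os i
    · simp only [hos, if_true]
      intro hEq
      apply hne
      simp only [ht, hos, if_true]
      linear_combination hEq
    · simp only [hos, if_false]
      intro hEq
      apply hne
      simp only [ht, hos]
      simp only [Bool.false_eq_true, if_false]
      linear_combination -hEq
end

section
/- Let G be a wheel with outer cycle C: v₁v₂⋯v_kv₁ and hub v, oriented arbitrarily, with φ: E(G) → ℤ₅. Assume each vertex in {v₃, …, v_{k−1}} has a forbidden set of at most two colors and all other forbidden sets are empty. Then there exists α ∈ ℤ₅ such that every proper precoloring of v_k, v₁, v₂ (proper on the path v_kv₁v₂) which does not extend to a proper (ℤ₅, φ)-coloring of G avoiding the forbidden sets satisfies c(v_k) − c(v₂) = α. -/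
open Finset

namespace Stmt9Aux

def Reach (d : ZMod 5) (ψ : ℕ → ZMod 5) (A : ℕ → Finset (ZMod 5)) : ℕ → Finset (ZMod 5)
  | 0 => {d}
  | j+1 => (A (j+1)).filter (fun y => ∃ x ∈ Reach d ψ A j, y ≠ x + ψ j)

lemma pathForced (m : ℕ) (ψ : ℕ → ZMod 5) (A : ℕ → Finset (ZMod 5))
    (hA : ∀ j, 1 ≤ j → j ≤ m → 2 ≤ (A j).card) (d a : ZMod 5)
    (hfail : ¬ ∃ c : ℕ → ZMod 5, c 0 = d ∧ (∀ i, i ≤ m → c (i+1) ≠ c i + ψ i) ∧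
      (∀ i, 1 ≤ i → i ≤ m → c i ∈ A i) ∧ c (m+1) = a) :
    ∃ r : ℕ → ZMod 5, r 0 = d ∧ a = r m + ψ m ∧
      ∀ j, 1 ≤ j → j ≤ m → r j ∈ A j ∧ r (j-1) + ψ (j-1) ∈ A j ∧
        r j ≠ r (j-1) + ψ (j-1) ∧ ∀ z ∈ A j, z = r (j-1) + ψ (j-1) ∨ z = r j := by
  set R := Reach d ψ A with hR
  -- completeness
  have complete : ∀ j, ∀ y ∈ R j, ∃ c : ℕ → ZMod 5, c 0 = d ∧
      (∀ i, i < j → c (i+1) ≠ c i + ψ i) ∧ (∀ i, 1 ≤ i → i ≤ j → c i ∈ A i) ∧ c j = y := by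
    intro j
    induction j with
    | zero =>
      intro y hy
      simp only [hR, Reach, mem_singleton] at hy
      exact ⟨fun _ => d, rfl, fun i hi => absurd hi (Nat.not_lt_zero i), fun i h1 h2 => absurd (h1.trans h2) (by omega), hy ▸ rfl⟩
    | succ j ih =>
      intro y hy
      simp only [hR, Reach, mem_filter] at hy
      obtain ⟨hyA, x, hx, hyx⟩ := hy
      obtain ⟨c, hc0, hce, hcm, hcj⟩ := ih x hx
      refine ⟨fun i => if i ≤ j then c i else y, by simp [hc0], ?_, ?_, by simp⟩
      · intro i hi
        rcases Nat.lt_or_ge i j with h | h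
        · have hi1 : i + 1 ≤ j := h
          have hi0 : i ≤ j := by omega
          simpa [hi1, hi0] using hce i h
        · have hij : i = j := by omega
          subst hij
          simpa [hcj] using hyx
      · intro i h1 h2
        rcases Nat.lt_or_ge i (j+1) with h | h
        · have : i ≤ j := by omega
          simpa [this] using hcm i h1 (by omega)
        · have hij : i = j + 1 := by omega
          subst hij
          simpa using hyA
  have hforce : ∀ x ∈ R m, a = x + ψ m := by
    intro x hx
    by_contra hax
    obtain ⟨c, hc0, hce, hcm, hcj⟩ := complete m x hx
    refine hfail ⟨fun i => if i ≤ m then c i else a, by simp [hc0], ?_, ?_, by simp⟩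
    · intro i hi
      rcases Nat.lt_or_ge i m with h | h
      · have hi1 : i + 1 ≤ m := h
        have hi0 : i ≤ m := by omega
        simpa [hi1, hi0] using hce i h
      · have hij : i = m := by omega
        subst hij
        simpa [hcj] using hax
    · intro i h1 h2
      simpa [h2] using hcm i h1 h2
  have hne : ∀ j, j ≤ m → (R j).Nonempty := by
    intro j
    induction j with
    | zero => intro _; exact ⟨d, by simp [hR, Reach]⟩
    | succ j ih =>
      intro hj
      obtain ⟨x, hx⟩ := ih (by omega)
      have h2 : 2 ≤ (A (j+1)).card := hA (j+1) (by omega) hj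
      have : ∃ y ∈ A (j+1), y ≠ x + ψ j := by
        by_contra hcon
        push_neg at hcon
        have : A (j+1) ⊆ {x + ψ j} := fun z hz => mem_singleton.mpr (hcon z hz)
        have := card_le_card this
        simp at this
        omega
      obtain ⟨y, hy, hyx⟩ := this
      exact ⟨y, by simp only [hR, Reach, mem_filter]; exact ⟨hy, x, hx, hyx⟩⟩
  have hsingle : ∀ i, i ≤ m → (R (m - i)).card = 1 := by
    intro i
    induction i with
    | zero =>
      intro _
      have hsub : R m ⊆ {a - ψ m} := by
        intro x hx
        have := hforce x hx
        simp [eq_sub_of_add_eq this.symm]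
      have h1 : (R m).card ≤ 1 := le_trans (card_le_card hsub) (by simp)
      have h2 := (hne m le_rfl).card_pos
      simp only [Nat.sub_zero]
      omega
    | succ i ih =>
      intro hi
      have hprev := ih (by omega)
      set j := m - (i+1) with hj
      have hjm : m - i = j + 1 := by omega
      rw [hjm] at hprev
      by_contra hcon
      have hnej := hne j (by omega)
      have h2 : 2 ≤ (R j).card := by
        have := hnej.card_pos
        omega
      obtain ⟨x1, hx1, x2, hx2, hx12⟩ := one_lt_card.mp h2
      have hsub : A (j+1) ⊆ R (j+1) := by
        intro z hz
        simp only [hR, Reach, mem_filter]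
        refine ⟨hz, ?_⟩
        rcases eq_or_ne z (x1 + ψ j) with h | h
        · exact ⟨x2, hx2, by rw [h]; intro hc; exact hx12 (by exact add_right_cancel hc.symm ▸ rfl)⟩
        · exact ⟨x1, hx1, h⟩
      have := card_le_card hsub
      have hA2 : 2 ≤ (A (j+1)).card := hA (j+1) (by omega) (by omega)
      omega
  have hsing : ∀ j, j ≤ m → ∃ y, R j = {y} := by
    intro j hj
    have := hsingle (m - j) (by omega)
    rw [show m - (m - j) = j by omega] at this
    exact card_eq_one.mp this
  set r : ℕ → ZMod 5 := fun j => ∑ x ∈ R j, x with hr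
  have hRr : ∀ j, j ≤ m → R j = {r j} := by
    intro j hj
    obtain ⟨y, hy⟩ := hsing j hj
    rw [hy, hr]
    simp [hy]
  have hr0 : r 0 = d := by
    simp [hr, hR, Reach]
  have hrm : a = r m + ψ m := hforce (r m) (by rw [hRr m le_rfl]; simp)
  refine ⟨r, hr0, hrm, ?_⟩
  intro j h1 h2
  obtain ⟨j', rfl⟩ : ∃ j', j = j' + 1 := ⟨j - 1, by omega⟩
  have hRj : R (j'+1) = {r (j'+1)} := hRr _ h2
  have hRj' : R j' = {r j'} := hRr _ (by omega)
  have hmem : ∀ z, z ∈ R (j'+1) ↔ (z ∈ A (j'+1) ∧ z ≠ r j' + ψ j') := by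
    intro z
    simp only [hR, Reach, mem_filter]
    constructor
    · rintro ⟨hz, x, hx, hzx⟩
      rw [← hR, hRj', mem_singleton] at hx
      exact ⟨hz, hx ▸ hzx⟩
    · rintro ⟨hz, hzx⟩
      exact ⟨hz, r j', by rw [← hR, hRj']; simp, hzx⟩
  have hrj : r (j'+1) ∈ R (j'+1) := by rw [hRj]; simp
  obtain ⟨hrA, hrne⟩ := (hmem _).mp hrj
  have hcov : ∀ z ∈ A (j'+1), z = r j' + ψ j' ∨ z = r (j'+1) := by
    intro z hz
    rcases eq_or_ne z (r j' + ψ j') with h | h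
    · exact Or.inl h
    · right
      have : z ∈ R (j'+1) := (hmem z).mpr ⟨hz, h⟩
      rw [hRj, mem_singleton] at this
      exact this
  have hpA : r j' + ψ j' ∈ A (j'+1) := by
    by_contra hp
    have hsub : A (j'+1) ⊆ {r (j'+1)} := by
      intro z hz
      rcases hcov z hz with h | h
      · exact absurd (h ▸ hz) hp
      · simp [h]
    have hc1 : (A (j'+1)).card ≤ 1 := le_trans (card_le_card hsub) (by simp)
    have hc2 := hA (j'+1) (by omega) h2
    omega
  simpa using ⟨hrA, hpA, hrne, hcov⟩


lemma stepGen (T : Finset (ZMod 5)) (hT : 3 ≤ T.card) (h1 p q : ZMod 5)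
    (hcov : ∀ z ∈ T, z ≠ h1 → z = p ∨ z = q) : h1 ∈ T := by
  by_contra hc
  have hsub : T ⊆ {p, q} := by
    intro z hz
    rcases hcov z hz (fun e => hc (e ▸ hz)) with h | h <;> simp [h]
  have h1 : T.card ≤ 2 := le_trans (card_le_card hsub) (card_insert_le _ _ |>.trans (by simp))
  omega

lemma stepM (T : Finset (ZMod 5)) (hT : 3 ≤ T.card) (h1 h2 : ZMod 5) (hh : h1 ≠ h2)
    (p q q' : ZMod 5)
    (hq : q ∈ T) (hq1 : q ≠ h1) (hp : p ∈ T) (hp1 : p ≠ h1) (hqp : q ≠ p)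
    (hcov : ∀ z ∈ T, z ≠ h1 → z = p ∨ z = q)
    (hq' : q' ∈ T) (hq2 : q' ≠ h2) (hp2 : p ≠ h2) (hqp' : q' ≠ p)
    (hcov' : ∀ z ∈ T, z ≠ h2 → z = p ∨ z = q') :
    q = h2 ∧ q' = h1 ∧ (∀ z, z ∈ T ↔ (z = p ∨ z = h1 ∨ z = h2)) := by
  have hh1T : h1 ∈ T := stepGen T hT h1 p q hcov
  have hh2T : h2 ∈ T := stepGen T hT h2 p q' hcov'
  have e1 : q' = h1 := by
    rcases hcov' h1 hh1T hh with h | h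
    · exact absurd h.symm hp1
    · exact h.symm
  have e2 : q = h2 := by
    rcases hcov h2 hh2T (Ne.symm hh) with h | h
    · exact absurd h.symm hp2
    · exact h.symm
  refine ⟨e2, e1, fun z => ⟨fun hz => ?_, fun hz => ?_⟩⟩
  · rcases eq_or_ne z h1 with h | h
    · exact Or.inr (Or.inl h)
    · rcases hcov z hz h with h' | h'
      · exact Or.inl h'
      · exact Or.inr (Or.inr (h'.trans e2))
  · rcases hz with h | h | h
    · exact h ▸ hp
    · exact h ▸ hh1T
    · exact h ▸ hh2T

lemma stepS (T : Finset (ZMod 5)) (hT : 3 ≤ T.card) (h1 h2 : ZMod 5) (hh : h1 ≠ h2)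
    (p p' q q' : ZMod 5) (hpp' : p - p' = h2 - h1) (hpne : p ≠ p')
    (hq : q ∈ T) (hq1 : q ≠ h1) (hp : p ∈ T) (hp1 : p ≠ h1) (hqp : q ≠ p)
    (hcov : ∀ z ∈ T, z ≠ h1 → z = p ∨ z = q)
    (hq' : q' ∈ T) (hq2 : q' ≠ h2) (hp' : p' ∈ T) (hp2 : p' ≠ h2) (hqp' : q' ≠ p')
    (hcov' : ∀ z ∈ T, z ≠ h2 → z = p' ∨ z = q') :
    q = q' ∧ q ≠ h2 ∧ (∀ z, z ∈ T ↔ (z = q ∨ z = h1 ∨ z = h2)) := by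
  have hh1T : h1 ∈ T := stepGen T hT h1 p q hcov
  have hh2T : h2 ∈ T := stepGen T hT h2 p' q' hcov'
  have e1 : h1 = p' ∨ h1 = q' := hcov' h1 hh1T hh
  have e2 : h2 = p ∨ h2 = q := hcov h2 hh2T (Ne.symm hh)
  rcases e1 with e1 | e1
  · rcases e2 with e2 | e2
    · -- h1 = p', h2 = p : the good merge case
      have hq'q : q' = q := by
        rcases hcov q' hq' (fun hc => hqp' (hc.trans e1)) with h | h
        · exact absurd (h.trans e2.symm) hq2
        · exact h
      refine ⟨hq'q.symm, fun hc => hqp (hc.trans e2), fun z => ⟨fun hz => ?_, fun hz => ?_⟩⟩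
      · rcases eq_or_ne z h1 with h | h
        · exact Or.inr (Or.inl h)
        · rcases hcov z hz h with h' | h'
          · exact Or.inr (Or.inr (h'.trans e2.symm))
          · exact Or.inl h'
      · rcases hz with h | h | h
        · exact h ▸ hq
        · exact h ▸ hh1T
        · exact h ▸ hh2T
    · -- h1 = p', h2 = q : contradiction
      exfalso
      rw [← e1, e2] at hpp'
      exact hqp (sub_left_inj.mp hpp').symm
  · rcases e2 with e2 | e2
    · -- h1 = q', h2 = p : contradiction
      exfalso
      rw [e2, e1] at hpp'
      exact hqp' (sub_right_inj.mp hpp').symm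
    · -- h1 = q', h2 = q : contradiction via p = p'
      exfalso
      have hpne2 : p ≠ h2 := fun h => hqp (h ▸ e2.symm ▸ rfl)
      rcases hcov' p hp hpne2 with h | h
      · exact hpne h
      · exact hp1 (h.trans e1.symm)


private lemma combine2 (δ D H1 H2 D' H1' H2' X X' : ZMod 5)
    (e1 : ∀ z, (z = D ∨ z = H1 ∨ z = H2) ↔ (z = D' ∨ z = H1' ∨ z = H2'))
    (em : ∀ z, (z = X ∨ z = H1 + δ ∨ z = H2 + δ) ↔ (z = X' ∨ z = H1' + δ ∨ z = H2' + δ))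
    (dDH1 : D ≠ H1) (dDH2 : D ≠ H2) (dH : H1 ≠ H2)
    (dDH1' : D' ≠ H1') (dDH2' : D' ≠ H2') (dH' : H1' ≠ H2')
    (dXK1 : X ≠ H1 + δ) (dXK2 : X ≠ H2 + δ) (dXK1' : X' ≠ H1' + δ) (dXK2' : X' ≠ H2' + δ)
    (hD : D = H1') (hD' : D' = H1) :
    X - D = X' - D' := by
  have hH2 : H2 = H2' := by
    rcases (e1 H2).mp (Or.inr (Or.inr rfl)) with h | h | h
    · exact absurd (h.trans hD') (Ne.symm dH)
    · exact absurd (h.trans hD.symm) (Ne.symm dDH2)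
    · exact h
  have hX' : X' = H1 + δ := by
    rcases (em (H1 + δ)).mp (Or.inr (Or.inl rfl)) with h | h | h
    · exact h.symm
    · exact absurd (hD ▸ add_right_cancel h : H1 = D) (Ne.symm dDH1)
    · exact absurd (hH2 ▸ add_right_cancel h : H1 = H2) dH
  have hX : X = D + δ := by
    rcases (em (D + δ)).mpr (Or.inr (Or.inl (by rw [hD]))) with h | h | h
    · exact h.symm
    · exact absurd (add_right_cancel h) dDH1
    · exact absurd (add_right_cancel h) dDH2
  rw [hX, hX', hD']
  ring

private lemma combine1 (δ D H1 H2 D' H1' H2' X X' : ZMod 5)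
    (e1 : ∀ z, (z = D ∨ z = H1 ∨ z = H2) ↔ (z = D' ∨ z = H1' ∨ z = H2'))
    (em : ∀ z, (z = X ∨ z = H1 + δ ∨ z = H2 + δ) ↔ (z = X' ∨ z = H1' + δ ∨ z = H2' + δ))
    (dDH1 : D ≠ H1) (dDH2 : D ≠ H2) (dH : H1 ≠ H2)
    (dDH1' : D' ≠ H1') (dDH2' : D' ≠ H2') (dH' : H1' ≠ H2')
    (dXK1 : X ≠ H1 + δ) (dXK2 : X ≠ H2 + δ) (dXK1' : X' ≠ H1' + δ) (dXK2' : X' ≠ H2' + δ)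
    (hD : D = H1') :
    X - D = X' - D' := by
  rcases (e1 D').mpr (Or.inl rfl) with h | h | h
  · exact absurd (h.trans hD) dDH1'
  · exact combine2 δ D H1 H2 D' H1' H2' X X' e1 em dDH1 dDH2 dH dDH1' dDH2' dH'
      dXK1 dXK2 dXK1' dXK2' hD h
  · exact combine2 δ D H2 H1 D' H1' H2' X X'
      (fun z => (by tauto : (z = D ∨ z = H2 ∨ z = H1) ↔ (z = D ∨ z = H1 ∨ z = H2)).trans (e1 z))
      (fun z => (by tauto : (z = X ∨ z = H2 + δ ∨ z = H1 + δ) ↔ (z = X ∨ z = H1 + δ ∨ z = H2 + δ)).trans (em z))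
      dDH2 dDH1 (Ne.symm dH) dDH1' dDH2' dH' dXK2 dXK1 dXK1' dXK2' hD h

lemma combine (δ D H1 H2 D' H1' H2' X X' : ZMod 5)
    (e1 : ∀ z, (z = D ∨ z = H1 ∨ z = H2) ↔ (z = D' ∨ z = H1' ∨ z = H2'))
    (em : ∀ z, (z = X ∨ z = H1 + δ ∨ z = H2 + δ) ↔ (z = X' ∨ z = H1' + δ ∨ z = H2' + δ))
    (dDH1 : D ≠ H1) (dDH2 : D ≠ H2) (dH : H1 ≠ H2)
    (dDH1' : D' ≠ H1') (dDH2' : D' ≠ H2') (dH' : H1' ≠ H2')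
    (dXK1 : X ≠ H1 + δ) (dXK2 : X ≠ H2 + δ) (dXK1' : X' ≠ H1' + δ) (dXK2' : X' ≠ H2' + δ) :
    X - D = X' - D' := by
  rcases (e1 D).mp (Or.inl rfl) with h | h | h
  · -- D = D'
    have hp1 : H1 = H1' ∨ H1 = H2' := by
      rcases (e1 H1).mp (Or.inr (Or.inl rfl)) with h' | h' | h'
      · exact absurd (h'.trans h.symm).symm dDH1
      · exact Or.inl h'
      · exact Or.inr h'
    rcases hp1 with h1 | h1
    · have h2 : H2 = H2' := by
        rcases (e1 H2).mp (Or.inr (Or.inr rfl)) with h' | h' | h'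
        · exact absurd (h'.trans h.symm).symm dDH2
        · exact absurd (h'.trans h1.symm) (Ne.symm dH)
        · exact h'
      have hX : X = X' := by
        rcases (em X).mp (Or.inl rfl) with h' | h' | h'
        · exact h'
        · exact absurd (h'.trans (by rw [h1] : H1' + δ = H1 + δ)) dXK1
        · exact absurd (h'.trans (by rw [h2] : H2' + δ = H2 + δ)) dXK2
      rw [hX, h]
    · have h2 : H2 = H1' := by
        rcases (e1 H2).mp (Or.inr (Or.inr rfl)) with h' | h' | h'
        · exact absurd (h'.trans h.symm).symm dDH2
        · exact h'
        · exact absurd (h'.trans h1.symm) (Ne.symm dH)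
      have hX : X = X' := by
        rcases (em X).mp (Or.inl rfl) with h' | h' | h'
        · exact h'
        · exact absurd (h'.trans (by rw [h2] : H1' + δ = H2 + δ)) dXK2
        · exact absurd (h'.trans (by rw [h1] : H2' + δ = H1 + δ)) dXK1
      rw [hX, h]
  · exact combine1 δ D H1 H2 D' H1' H2' X X' e1 em dDH1 dDH2 dH dDH1' dDH2' dH'
      dXK1 dXK2 dXK1' dXK2' h
  · exact combine1 δ D H1 H2 D' H2' H1' X X'
      (fun z => (e1 z).trans (by tauto))
      (fun z => (em z).trans (by tauto))
      dDH1 dDH2 dH dDH2' dDH1' (Ne.symm dH') dXK1 dXK2 dXK2' dXK1' h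


lemma structural (m : ℕ) (ψ σ : ℕ → ZMod 5) (T : ℕ → Finset (ZMod 5))
    (hT : ∀ j, 1 ≤ j → j ≤ m → 3 ≤ (T j).card)
    (d a h1 h2 : ZMod 5) (hh : h1 ≠ h2)
    (hfail : ∀ h, h = h1 ∨ h = h2 → ¬ ∃ c : ℕ → ZMod 5, c 0 = d ∧
      (∀ i, i ≤ m → c (i+1) ≠ c i + ψ i) ∧
      (∀ i, 1 ≤ i → i ≤ m → c i ∈ (T i).erase (h + σ i)) ∧ c (m+1) = a) :
    (m = 0 ∧ a = d + ψ 0) ∨ (1 ≤ m ∧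
      (∀ z, z ∈ T 1 ↔ (z = d + ψ 0 ∨ z = h1 + σ 1 ∨ z = h2 + σ 1)) ∧
      d + ψ 0 ≠ h1 + σ 1 ∧ d + ψ 0 ≠ h2 + σ 1 ∧
      ∃ X, a = X + ψ m ∧ (∀ z, z ∈ T m ↔ (z = X ∨ z = h1 + σ m ∨ z = h2 + σ m)) ∧
        X ≠ h1 + σ m ∧ X ≠ h2 + σ m) := by
  have hcard : ∀ (h : ZMod 5) j, 1 ≤ j → j ≤ m → 2 ≤ ((T j).erase (h + σ j)).card := by
    intro h j hj1 hj2
    have := hT j hj1 hj2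
    have := Finset.pred_card_le_card_erase (s := T j) (a := h + σ j)
    omega
  obtain ⟨r, hr0, hra, hrE⟩ := pathForced m ψ _ (hcard h1) d a (hfail h1 (Or.inl rfl))
  obtain ⟨r', hr0', hra', hrE'⟩ := pathForced m ψ _ (hcard h2) d a (hfail h2 (Or.inr rfl))
  -- unpack erase facts
  have E1 : ∀ j, 1 ≤ j → j ≤ m →
      (r j ∈ T j ∧ r j ≠ h1 + σ j) ∧ (r (j-1) + ψ (j-1) ∈ T j ∧ r (j-1) + ψ (j-1) ≠ h1 + σ j) ∧
      r j ≠ r (j-1) + ψ (j-1) ∧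
      (∀ z ∈ T j, z ≠ h1 + σ j → z = r (j-1) + ψ (j-1) ∨ z = r j) := by
    intro j hj1 hj2
    obtain ⟨ha, hb, hc, hd'⟩ := hrE j hj1 hj2
    rw [Finset.mem_erase] at ha hb
    exact ⟨⟨ha.2, ha.1⟩, ⟨hb.2, hb.1⟩, hc, fun z hz hzne => hd' z (Finset.mem_erase.mpr ⟨hzne, hz⟩)⟩
  have E2 : ∀ j, 1 ≤ j → j ≤ m →
      (r' j ∈ T j ∧ r' j ≠ h2 + σ j) ∧ (r' (j-1) + ψ (j-1) ∈ T j ∧ r' (j-1) + ψ (j-1) ≠ h2 + σ j) ∧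
      r' j ≠ r' (j-1) + ψ (j-1) ∧
      (∀ z ∈ T j, z ≠ h2 + σ j → z = r' (j-1) + ψ (j-1) ∨ z = r' j) := by
    intro j hj1 hj2
    obtain ⟨ha, hb, hc, hd'⟩ := hrE' j hj1 hj2
    rw [Finset.mem_erase] at ha hb
    exact ⟨⟨ha.2, ha.1⟩, ⟨hb.2, hb.1⟩, hc, fun z hz hzne => hd' z (Finset.mem_erase.mpr ⟨hzne, hz⟩)⟩
  have hhσ : ∀ j, h1 + σ j ≠ h2 + σ j := fun j hc => hh (add_right_cancel hc)
  -- alternation induction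
  have St : ∀ j, j ≤ m →
      ((Even j → r j = r' j) ∧ (¬ Even j → r j = h2 + σ j ∧ r' j = h1 + σ j)) := by
    intro j
    induction j with
    | zero => exact fun _ => ⟨fun _ => hr0.trans hr0'.symm, fun hodd => absurd Even.zero hodd⟩
    | succ j ih =>
      intro hj
      have hjm : j ≤ m := by omega
      obtain ⟨ihE, ihO⟩ := ih hjm
      obtain ⟨⟨hq, hq1⟩, ⟨hp, hp1⟩, hqp, hcov⟩ := E1 (j+1) (by omega) hj
      obtain ⟨⟨hq', hq2⟩, ⟨hp', hp2⟩, hqp', hcov'⟩ := E2 (j+1) (by omega) hj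
      simp only [Nat.add_sub_cancel] at hq hq1 hp hp1 hqp hcov hq' hq2 hp' hp2 hqp' hcov'
      by_cases hje : Even j
      · -- merged at j, split at j+1
        have hmerge : r j = r' j := ihE hje
        rw [← hmerge] at hp' hp2 hqp' hcov'
        obtain ⟨hM1, hM2, _⟩ := stepM (T (j+1)) (hT (j+1) (by omega) hj) (h1 + σ (j+1))
          (h2 + σ (j+1)) (hhσ (j+1)) (r j + ψ j) (r (j+1)) (r' (j+1))
          hq hq1 hp hp1 hqp hcov hq' hq2 hp2 hqp' hcov'
        exact ⟨fun he => absurd hje (Nat.even_add_one.mp he), fun _ => ⟨hM1, hM2⟩⟩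
      · -- split at j, merged at j+1
        obtain ⟨hs1, hs2⟩ := ihO hje
        have hpp' : (r j + ψ j) - (r' j + ψ j) = (h2 + σ (j+1)) - (h1 + σ (j+1)) := by
          rw [hs1, hs2]; ring
        have hpne : r j + ψ j ≠ r' j + ψ j := by
          rw [hs1, hs2]
          intro hc
          exact hh (add_right_cancel (add_right_cancel hc)).symm
        obtain ⟨hM1, _, _⟩ := stepS (T (j+1)) (hT (j+1) (by omega) hj) (h1 + σ (j+1))
          (h2 + σ (j+1)) (hhσ (j+1)) (r j + ψ j) (r' j + ψ j) (r (j+1)) (r' (j+1))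
          hpp' hpne hq hq1 hp hp1 hqp hcov hq' hq2 hp' hp2 hqp' hcov'
        exact ⟨fun _ => hM1, fun hodd => absurd (Nat.even_add_one.mpr hje) hodd⟩
  -- endgame
  have hend : r m = r' m := add_right_cancel (hra.symm.trans hra')
  rcases Nat.eq_zero_or_pos m with hm0 | hm1
  · subst hm0
    exact Or.inl ⟨rfl, by rw [hra, hr0]⟩
  · by_cases hme : Even m
    · -- m even and positive : extract G1 and Gm
      obtain ⟨j, rfl⟩ : ∃ j, m = j + 1 := ⟨m - 1, by omega⟩
      have hjodd : ¬ Even j := Nat.even_add_one.mp hme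
      obtain ⟨hs1, hs2⟩ := (St j (by omega)).2 hjodd
      obtain ⟨⟨hq, hq1⟩, ⟨hp, hp1⟩, hqp, hcov⟩ := E1 (j+1) (by omega) le_rfl
      obtain ⟨⟨hq', hq2⟩, ⟨hp', hp2⟩, hqp', hcov'⟩ := E2 (j+1) (by omega) le_rfl
      simp only [Nat.add_sub_cancel] at hq hq1 hp hp1 hqp hcov hq' hq2 hp' hp2 hqp' hcov'
      have hpp' : (r j + ψ j) - (r' j + ψ j) = (h2 + σ (j+1)) - (h1 + σ (j+1)) := by
        rw [hs1, hs2]; ring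
      have hpne : r j + ψ j ≠ r' j + ψ j := by
        rw [hs1, hs2]
        intro hc
        exact hh (add_right_cancel (add_right_cancel hc)).symm
      obtain ⟨hM1, hM2, hMcov⟩ := stepS (T (j+1)) (hT (j+1) (by omega) le_rfl) (h1 + σ (j+1))
        (h2 + σ (j+1)) (hhσ (j+1)) (r j + ψ j) (r' j + ψ j) (r (j+1)) (r' (j+1))
        hpp' hpne hq hq1 hp hp1 hqp hcov hq' hq2 hp' hp2 hqp' hcov'
      -- G1 facts at position 1
      obtain ⟨⟨gq, gq1⟩, ⟨gp, gp1⟩, gqp, gcov⟩ := E1 1 le_rfl (by omega)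
      obtain ⟨⟨gq', gq2⟩, ⟨gp', gp2⟩, gqp', gcov'⟩ := E2 1 le_rfl (by omega)
      simp only [show (1:ℕ) - 1 = 0 from rfl, hr0, hr0'] at gq gq1 gp gp1 gqp gcov gq' gq2 gp' gp2 gqp' gcov'
      obtain ⟨_, _, gMcov⟩ := stepM (T 1) (hT 1 le_rfl (by omega)) (h1 + σ 1) (h2 + σ 1)
        (hhσ 1) (d + ψ 0) (r 1) (r' 1) gq gq1 gp gp1 gqp gcov gq' gq2 gp2 gqp' gcov'
      exact Or.inr ⟨by omega, gMcov, gp1, gp2, r (j+1), hra, hMcov, hq1, hM2⟩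
    · obtain ⟨hs1, hs2⟩ := (St m le_rfl).2 hme
      exact absurd (hs1.symm.trans (hend.trans hs2)).symm (hhσ m)


end Stmt9Aux

/-- **Lemma 1 for wheels.** Let `G` be a wheel: outer cycle
`v₁ v₂ ⋯ v_k v₁` on vertices `ZMod k` (`k ≥ 3`, with `v₁ = 0`, `v₂ = 1`, `v_k = -1`;
the edge `i — i+1` is oriented by `o i` with label `φc i`) plus a hub adjacent to every
outer vertex (spoke at `i` oriented by `os i` with label `φs i`).  Assume each vertex in
`{v₃, …, v_{k−1}}` has a forbidden set of at most two colors and all other forbidden sets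
are empty.  Then there is `α ∈ ℤ₅` such that every proper precoloring `a, b, d` of
`v_k, v₁, v₂` (proper on the path `v_k v₁ v₂`) which does not extend to a proper
`(ℤ₅, φ)`-coloring of `G` avoiding the forbidden sets satisfies `a - d = α`. -/
theorem stmt9 (k : ℕ) (hk : 3 ≤ k)
    (o : ZMod k → Bool) (φc : ZMod k → ZMod 5)
    (os : ZMod k → Bool) (φs : ZMod k → ZMod 5)
    (F : ZMod k → Finset (ZMod 5))
    (hF : ∀ i, (F i).card ≤ 2)
    (hFk : F (-1) = ∅) (hF1 : F 0 = ∅) (hF2 : F 1 = ∅) :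
    ∃ α : ZMod 5, ∀ a b d : ZMod 5,
      (if o (-1) then b - a ≠ φc (-1) else a - b ≠ φc (-1)) →
      (if o 0 then d - b ≠ φc 0 else b - d ≠ φc 0) →
      (¬ ∃ (c : ZMod k → ZMod 5) (h : ZMod 5),
          c (-1) = a ∧ c 0 = b ∧ c 1 = d ∧
          (∀ i, c i ∉ F i) ∧
          (∀ i, if o i then c (i + 1) - c i ≠ φc i else c i - c (i + 1) ≠ φc i) ∧
          (∀ i, if os i then c i - h ≠ φs i else h - c i ≠ φs i)) →
      a - d = α := by
  haveI : NeZero k := ⟨by omega⟩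
  haveI : Fact (1 < k) := ⟨by omega⟩
  -- basic notation
  set ψv : ZMod k → ZMod 5 := fun i => if o i then φc i else -φc i with hψv
  set σv : ZMod k → ZMod 5 := fun i => if os i then φs i else -φs i with hσv
  set w : ℕ → ZMod k := fun j => ((1 + j : ℕ) : ZMod k) with hw
  set m : ℕ := k - 3 with hm
  set ψp : ℕ → ZMod 5 := fun j => ψv (w j) with hψp
  set σp : ℕ → ZMod 5 := fun j => σv (w j) with hσp
  set Tp : ℕ → Finset (ZMod 5) := fun j => Finset.univ \ F (w j) with hTp
  -- ZMod k facts
  have hcast_val : ∀ x : ZMod k, ((x.val : ℕ) : ZMod k) = x := ZMod.natCast_rightInverse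
  have hkm1 : ((k - 1 : ℕ) : ZMod k) = -1 := by
    rw [Nat.cast_sub (by omega : 1 ≤ k), ZMod.natCast_self]
    ring
  have hkm2 : ((k - 2 : ℕ) : ZMod k) = -2 := by
    rw [Nat.cast_sub (by omega : 2 ≤ k), ZMod.natCast_self]
    push_cast
    ring
  have hvk : ∀ j : ℕ, 1 + j < k → (w j).val = 1 + j := fun j hj => ZMod.val_cast_of_lt hj
  have hone_ne : (1 : ZMod k) ≠ 0 := one_ne_zero
  have hneg_ne : (-1 : ZMod k) ≠ 0 := fun hc => one_ne_zero (neg_eq_zero.mp hc)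
  have hcover : ∀ i : ZMod k, i ≠ 0 → i = w ((i - 1).val) ∧ (i - 1).val ≤ k - 2 := by
    intro i hi
    constructor
    · show i = ((1 + (i - 1).val : ℕ) : ZMod k)
      push_cast
      rw [hcast_val (i - 1)]
      ring
    · have h1 : (i - 1).val < k := ZMod.val_lt _
      have h2 : (i - 1).val ≠ k - 1 := by
        intro hc
        apply hi
        have h3 : i - 1 = ((k - 1 : ℕ) : ZMod k) := by rw [← hc]; exact (hcast_val _).symm
        rw [hkm1] at h3
        linear_combination h3
      omega
  have hj0 : ∀ i : ZMod k, (i - 1).val = 0 ↔ i = 1 := by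
    intro i
    rw [ZMod.val_eq_zero, sub_eq_zero]
  have hjk2 : ∀ i : ZMod k, (i - 1).val = k - 2 ↔ i = -1 := by
    intro i
    constructor
    · intro hc
      have h3 : i - 1 = ((k - 2 : ℕ) : ZMod k) := by rw [← hc]; exact (hcast_val _).symm
      rw [hkm2] at h3
      linear_combination h3
    · intro hc
      subst hc
      have : (-1 - 1 : ZMod k) = ((k - 2 : ℕ) : ZMod k) := by rw [hkm2]; ring
      rw [this, ZMod.val_cast_of_lt (by omega)]
  have hw0 : w 0 = 1 := by show ((1 + 0 : ℕ) : ZMod k) = 1; norm_num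
  have hwk2 : w (k - 2) = -1 := by
    show ((1 + (k - 2) : ℕ) : ZMod k) = -1
    rw [show 1 + (k - 2) = k - 1 by omega, hkm1]
  have hm1 : m + 1 = k - 2 := by omega
  -- edge and spoke condition normalizations
  have hedge : ∀ (x y : ZMod 5) (i : ZMod k),
      ((if o i then y - x ≠ φc i else x - y ≠ φc i) ↔ y ≠ x + ψv i) := by
    intro x y i
    simp only [hψv]
    split_ifs with h
    · constructor <;> intro h1 h2 <;> apply h1 <;> linear_combination h2
    · constructor <;> intro h1 h2 <;> apply h1 <;> linear_combination -h2
  have hspoke : ∀ (x h : ZMod 5) (i : ZMod k),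
      ((if os i then x - h ≠ φs i else h - x ≠ φs i) ↔ x ≠ h + σv i) := by
    intro x h i
    simp only [hσv]
    split_ifs with h'
    · constructor <;> intro h1 h2 <;> apply h1 <;> linear_combination h2
    · constructor <;> intro h1 h2 <;> apply h1 <;> linear_combination -h2
  -- cardinality of T
  have hTcard : ∀ j, 1 ≤ j → j ≤ m → 3 ≤ (Tp j).card := by
    intro j _ _
    simp only [hTp]
    rw [Finset.card_sdiff_of_subset (Finset.subset_univ _), Finset.card_univ, ZMod.card]
    have := hF (w j)
    omega
  -- the no-chain lemma
  have noChain : ∀ a b d : ZMod 5,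
      (if o (-1) then b - a ≠ φc (-1) else a - b ≠ φc (-1)) →
      (if o 0 then d - b ≠ φc 0 else b - d ≠ φc 0) →
      (¬ ∃ (c : ZMod k → ZMod 5) (h : ZMod 5),
          c (-1) = a ∧ c 0 = b ∧ c 1 = d ∧
          (∀ i, c i ∉ F i) ∧
          (∀ i, if o i then c (i + 1) - c i ≠ φc i else c i - c (i + 1) ≠ φc i) ∧
          (∀ i, if os i then c i - h ≠ φs i else h - c i ≠ φs i)) →
      ∀ h : ZMod 5, h ≠ a - σv (-1) → h ≠ b - σv 0 → h ≠ d - σv 1 →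
      ¬ ∃ c : ℕ → ZMod 5, c 0 = d ∧
        (∀ i, i ≤ m → c (i+1) ≠ c i + ψp i) ∧
        (∀ i, 1 ≤ i → i ≤ m → c i ∈ (Tp i).erase (h + σp i)) ∧ c (m+1) = a := by
    intro a b d hp1 hp2 hne h hha hhb hhd ⟨c, hc0, hce, hcm, hca⟩
    apply hne
    set cc : ZMod k → ZMod 5 := fun i => if i = 0 then b else c ((i - 1).val) with hcc
    have hcc0 : cc 0 = b := by simp [hcc]
    have hccn : ∀ i : ZMod k, i ≠ 0 → cc i = c ((i - 1).val) := by
      intro i hi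
      simp [hcc, hi]
    have hccA : cc (-1) = a := by
      rw [hccn _ hneg_ne, (hjk2 (-1)).mpr rfl, ← hm1]
      exact hca
    have hcc1 : cc 1 = d := by
      rw [hccn _ hone_ne, (hj0 1).mpr rfl]
      exact hc0
    refine ⟨cc, h, hccA, hcc0, hcc1, ?_, ?_, ?_⟩
    · -- forbidden sets
      intro i
      by_cases hi : i = 0
      · subst hi; rw [hcc0, hF1]; exact Finset.notMem_empty b
      · rw [hccn i hi]
        obtain ⟨hiw, hile⟩ := hcover i hi
        by_cases hi1 : (i - 1).val = 0
        · rw [hi1, (hj0 i).mp hi1, hF2]; exact Finset.notMem_empty _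
        · by_cases hik : (i - 1).val = k - 2
          · rw [hik, (hjk2 i).mp hik, hFk]; exact Finset.notMem_empty _
          · have hmem := hcm ((i - 1).val) (by omega) (by omega)
            rw [Finset.mem_erase] at hmem
            have h2 := hmem.2
            rw [hTp] at h2
            simp only [Finset.mem_sdiff] at h2
            rw [congrArg F hiw]
            exact h2.2
    · -- cycle edges
      intro i
      by_cases him : i = -1
      · subst him
        rw [show (-1 + 1 : ZMod k) = 0 by ring, hcc0, hccA]
        exact hp1
      · by_cases hi0 : i = 0
        · subst hi0
          rw [show (0 + 1 : ZMod k) = 1 by ring, hcc1, hcc0]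
          exact hp2
        · obtain ⟨hiw, hile⟩ := hcover i hi0
          have hik : (i - 1).val ≠ k - 2 := fun hc => him ((hjk2 i).mp hc)
          have hjm : (i - 1).val ≤ m := by omega
          have hi1ne : i + 1 ≠ 0 := by
            intro hc
            exact him (by linear_combination hc)
          have hval_i : i.val = (i - 1).val + 1 := by
            conv_lhs => rw [hiw]
            rw [hvk _ (by omega)]
            omega
          have heq1 : ((i + 1 - 1) : ZMod k) = i := by ring
          have hψe : ψp ((i - 1).val) = ψv i := by
            simp only [hψp]
            rw [← hiw]
          rw [hedge (cc i) (cc (i+1)) i, hccn i hi0, hccn (i+1) hi1ne, heq1, hval_i, ← hψe]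
          exact hce _ hjm
    · -- spokes
      intro i
      rw [hspoke]
      by_cases hi : i = 0
      · subst hi
        rw [hcc0]
        intro hc
        exact hhb (by linear_combination -hc)
      · rw [hccn i hi]
        obtain ⟨hiw, hile⟩ := hcover i hi
        by_cases hi1 : (i - 1).val = 0
        · rw [hi1, hc0, (hj0 i).mp hi1]
          intro hc
          exact hhd (by linear_combination -hc)
        · by_cases hik : (i - 1).val = k - 2
          · rw [hik, ← hm1, hca, (hjk2 i).mp hik]
            intro hc
            exact hha (by linear_combination -hc)
          · have hmem := hcm ((i - 1).val) (by omega) (by omega)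
            rw [Finset.mem_erase] at hmem
            have hne' := hmem.1
            have hσe : σp ((i - 1).val) = σv i := by
              simp only [hσp]
              rw [← hiw]
            rw [← hσe]
            exact hne'
  -- structural conclusion for any bad triple
  have struct : ∀ a b d : ZMod 5,
      (if o (-1) then b - a ≠ φc (-1) else a - b ≠ φc (-1)) →
      (if o 0 then d - b ≠ φc 0 else b - d ≠ φc 0) →
      (¬ ∃ (c : ZMod k → ZMod 5) (h : ZMod 5),
          c (-1) = a ∧ c 0 = b ∧ c 1 = d ∧
          (∀ i, c i ∉ F i) ∧
          (∀ i, if o i then c (i + 1) - c i ≠ φc i else c i - c (i + 1) ≠ φc i) ∧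
          (∀ i, if os i then c i - h ≠ φs i else h - c i ≠ φs i)) →
      ∃ h1 h2 : ZMod 5, h1 ≠ h2 ∧
      ((m = 0 ∧ a = d + ψp 0) ∨ (1 ≤ m ∧
        (∀ z, z ∈ Tp 1 ↔ (z = d + ψp 0 ∨ z = h1 + σp 1 ∨ z = h2 + σp 1)) ∧
        d + ψp 0 ≠ h1 + σp 1 ∧ d + ψp 0 ≠ h2 + σp 1 ∧
        ∃ X, a = X + ψp m ∧ (∀ z, z ∈ Tp m ↔ (z = X ∨ z = h1 + σp m ∨ z = h2 + σp m)) ∧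
          X ≠ h1 + σp m ∧ X ≠ h2 + σp m)) := by
    intro a b d hp1 hp2 hne
    -- find two allowed hub colors
    have hpair : ∃ h1 h2 : ZMod 5, h1 ≠ h2 ∧
        (h1 ≠ a - σv (-1) ∧ h1 ≠ b - σv 0 ∧ h1 ≠ d - σv 1) ∧
        (h2 ≠ a - σv (-1) ∧ h2 ≠ b - σv 0 ∧ h2 ≠ d - σv 1) := by
      set S : Finset (ZMod 5) := {a - σv (-1), b - σv 0, d - σv 1} with hS
      have hcS : S.card ≤ 3 := by
        rw [hS]
        refine le_trans (Finset.card_insert_le _ _) ?_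
        have h3 := Finset.card_insert_le (b - σv 0) ({d - σv 1} : Finset (ZMod 5))
        simp only [Finset.card_singleton] at h3
        omega
      have hc2 : 2 ≤ (Finset.univ \ S).card := by
        have hu : (Finset.univ : Finset (ZMod 5)).card = 5 := by
          rw [Finset.card_univ, ZMod.card]
        rw [Finset.card_sdiff_of_subset (Finset.subset_univ _), hu]
        omega
      obtain ⟨h1, hh1, h2, hh2, hne12⟩ := Finset.one_lt_card.mp (lt_of_lt_of_le one_lt_two hc2)
      rw [Finset.mem_sdiff, hS] at hh1 hh2
      simp only [Finset.mem_insert, Finset.mem_singleton, not_or] at hh1 hh2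
      exact ⟨h1, h2, hne12, ⟨hh1.2.1, hh1.2.2.1, hh1.2.2.2⟩, ⟨hh2.2.1, hh2.2.2.1, hh2.2.2.2⟩⟩
    obtain ⟨h1, h2, hne12, ⟨ha1, hb1, hd1⟩, ⟨ha2, hb2, hd2⟩⟩ := hpair
    refine ⟨h1, h2, hne12, Stmt9Aux.structural m ψp σp Tp hTcard d a h1 h2 hne12 ?_⟩
    intro h hh
    rcases hh with rfl | rfl
    · exact noChain a b d hp1 hp2 hne h ha1 hb1 hd1
    · exact noChain a b d hp1 hp2 hne h ha2 hb2 hd2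
  -- final assembly
  by_cases hex : ∃ a b d : ZMod 5,
      (if o (-1) then b - a ≠ φc (-1) else a - b ≠ φc (-1)) ∧
      (if o 0 then d - b ≠ φc 0 else b - d ≠ φc 0) ∧
      (¬ ∃ (c : ZMod k → ZMod 5) (h : ZMod 5),
          c (-1) = a ∧ c 0 = b ∧ c 1 = d ∧
          (∀ i, c i ∉ F i) ∧
          (∀ i, if o i then c (i + 1) - c i ≠ φc i else c i - c (i + 1) ≠ φc i) ∧
          (∀ i, if os i then c i - h ≠ φs i else h - c i ≠ φs i))
  · obtain ⟨a0, b0, d0, hq1, hq2, hq3⟩ := hex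
    refine ⟨a0 - d0, fun a b d hp1 hp2 hp3 => ?_⟩
    obtain ⟨h1, h2, hne12, hst⟩ := struct a b d hp1 hp2 hp3
    obtain ⟨h1', h2', hne12', hst'⟩ := struct a0 b0 d0 hq1 hq2 hq3
    rcases hst with ⟨hm0, he⟩ | ⟨hm1', hG1, hd1, hd2, X, hX, hGm, hXd1, hXd2⟩
    · rcases hst' with ⟨_, he'⟩ | ⟨hm1', _⟩
      · rw [he, he']; ring
      · omega
    · rcases hst' with ⟨hm0, _⟩ | ⟨_, hG1', hd1', hd2', X', hX', hGm', hXd1', hXd2'⟩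
      · omega
      · set δ : ZMod 5 := σp m - σp 1 with hδ
        have key1 : h1 + σp 1 + δ = h1 + σp m := by rw [hδ]; ring
        have key2 : h2 + σp 1 + δ = h2 + σp m := by rw [hδ]; ring
        have key1' : h1' + σp 1 + δ = h1' + σp m := by rw [hδ]; ring
        have key2' : h2' + σp 1 + δ = h2' + σp m := by rw [hδ]; ring
        have e1 : ∀ z, (z = d + ψp 0 ∨ z = h1 + σp 1 ∨ z = h2 + σp 1) ↔
            (z = d0 + ψp 0 ∨ z = h1' + σp 1 ∨ z = h2' + σp 1) :=
          fun z => (hG1 z).symm.trans (hG1' z)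
        have em : ∀ z, (z = X ∨ z = (h1 + σp 1) + δ ∨ z = (h2 + σp 1) + δ) ↔
            (z = X' ∨ z = (h1' + σp 1) + δ ∨ z = (h2' + σp 1) + δ) := by
          intro z
          rw [key1, key2, key1', key2']
          exact (hGm z).symm.trans (hGm' z)
        have hcomb := Stmt9Aux.combine δ (d + ψp 0) (h1 + σp 1) (h2 + σp 1) (d0 + ψp 0)
          (h1' + σp 1) (h2' + σp 1) X X' e1 em hd1 hd2
          (fun hc => hne12 (add_right_cancel hc))
          hd1' hd2' (fun hc => hne12' (add_right_cancel hc))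
          (key1 ▸ hXd1) (key2 ▸ hXd2) (key1' ▸ hXd1') (key2' ▸ hXd2')
        linear_combination hX - hX' + hcomb
  · refine ⟨0, fun a b d hp1 hp2 hp3 => absurd ⟨a, b, d, hp1, hp2, hp3⟩ hex⟩
end

section
/- Let G be a broken wheel with outer cycle v₁v₂⋯v_kv₁ and interior edges v₁v₃, v₁v₄, …, v₁v_{k−1}, where k ≥ 4. Then G is not (ℤ₅, 3)-extendable with respect to the path v_kv₁v₂: there exist an orientation, a function φ: E(G) → ℤ₅, a proper precoloring of v_k, v₁, v₂, and forbidden sets of size at most two on v₃, …, v_{k−1}, such that the precoloring does not extend to a proper (ℤ₅, φ)-coloring of G avoiding the forbidden sets. -/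
/-- A broken wheel on `k ≥ 4` vertices — outer cycle `v₁ v₂ ⋯ v_k v₁`
(vertices `ZMod k`, `v₁ = 0`, `v₂ = 1`, `v_k = -1`, edge `i — i+1` for each `i`) together
with the interior chords `v₁ vᵢ` for `3 ≤ i ≤ k−1` (i.e. `2 ≤ i.val ≤ k−2`) — is not
`(ℤ₅, 3)`-extendable with respect to the path `v_k v₁ v₂`: there exist an orientation
(`o` for cycle edges, `od` for chords), labels `φc, φd`, a precoloring `a, b, d` of
`v_k, v₁, v₂` proper on the path, and forbidden sets of size at most two on
`v₃, …, v_{k−1}`, such that the precoloring does not extend to a proper `(ℤ₅, φ)`-coloring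
avoiding the forbidden sets. -/
theorem stmt10 (k : ℕ) (hk : 4 ≤ k) :
    ∃ (o : ZMod k → Bool) (φc : ZMod k → ZMod 5)
      (od : ZMod k → Bool) (φd : ZMod k → ZMod 5)
      (a b d : ZMod 5) (F : ZMod k → Finset (ZMod 5)),
      (∀ i, (F i).card ≤ 2) ∧
      (if o (-1) then b - a ≠ φc (-1) else a - b ≠ φc (-1)) ∧
      (if o 0 then d - b ≠ φc 0 else b - d ≠ φc 0) ∧
      ¬ ∃ c : ZMod k → ZMod 5,
          c (-1) = a ∧ c 0 = b ∧ c 1 = d ∧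
          (∀ i, 2 ≤ i.val → i.val ≤ k - 2 → c i ∉ F i) ∧
          (∀ i, if o i then c (i + 1) - c i ≠ φc i else c i - c (i + 1) ≠ φc i) ∧
          (∀ i, 2 ≤ i.val → i.val ≤ k - 2 →
            if od i then c i - c 0 ≠ φd i else c 0 - c i ≠ φd i) := by
  haveI : NeZero k := ⟨by omega⟩
  refine ⟨fun _ => true, fun i => if i.val = k - 2 then 0 else 1,
    fun _ => true, fun _ => 2, 0, 0, 0, fun _ => {3, 4}, ?_, ?_, ?_, ?_⟩
  · intro i
    show ({3, 4} : Finset (ZMod 5)).card ≤ 2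
    decide
  · have hv : (-1 : ZMod k).val = k - 1 := by
      have : ((-1 : ZMod k)) = ((k - 1 : ℕ) : ZMod k) := by
        have h1 : ((k : ℕ) : ZMod k) = 0 := ZMod.natCast_self k
        have : ((k - 1 : ℕ) : ZMod k) = (k : ZMod k) - 1 := by
          push_cast [Nat.cast_sub (by omega : 1 ≤ k)]; ring
        rw [this, h1]; ring
      rw [this, ZMod.val_natCast_of_lt (by omega)]
    have h1 : (if (-1 : ZMod k).val = k - 2 then (0 : ZMod 5) else 1) = 1 := by
      rw [hv, if_neg (show ¬ (k - 1 = k - 2) by omega)]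
    simp only [if_pos rfl, h1]
    decide
  · have hv : (0 : ZMod k).val = 0 := ZMod.val_zero
    have h1 : (if (0 : ZMod k).val = k - 2 then (0 : ZMod 5) else 1) = 1 := by
      rw [hv, if_neg (show ¬ (0 = k - 2) by omega)]
    simp only [if_pos rfl, h1]
    decide
  · rintro ⟨c, ha, hb, hd, hF, hE, hC⟩
    have key : ∀ x : ZMod 5, x ≠ 1 → x - 0 ≠ 2 → x ∉ ({3, 4} : Finset (ZMod 5)) →
        x = 0 := by decide
    have claim : ∀ j : ℕ, 1 ≤ j → j ≤ k - 2 → c (j : ZMod k) = 0 := by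
      intro j hj1
      induction j, hj1 using Nat.le_induction with
      | base => intro _; simpa using hd
      | succ j hj ih =>
        intro hjk
        have hcj : c (j : ZMod k) = 0 := ih (by omega)
        have hvj : ((j : ℕ) : ZMod k).val = j := ZMod.val_natCast_of_lt (by omega)
        have hvj1 : ((j + 1 : ℕ) : ZMod k).val = j + 1 := ZMod.val_natCast_of_lt (by omega)
        have hEj : c ((j : ZMod k) + 1) - c (j : ZMod k) ≠
            (if ((j : ℕ) : ZMod k).val = k - 2 then (0 : ZMod 5) else 1) := by
          simpa using hE (j : ZMod k)
        rw [hvj, if_neg (show ¬ (j = k - 2) by omega), hcj] at hEj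
        have hcast : ((j : ZMod k) + 1) = ((j + 1 : ℕ) : ZMod k) := by push_cast; ring
        rw [hcast] at hEj
        have hFj : c ((j + 1 : ℕ) : ZMod k) ∉ ({3, 4} : Finset (ZMod 5)) :=
          hF ((j + 1 : ℕ) : ZMod k) (by rw [hvj1]; omega) (by rw [hvj1]; omega)
        have hCj : c ((j + 1 : ℕ) : ZMod k) - c 0 ≠ (2 : ZMod 5) := by
          simpa using hC ((j + 1 : ℕ) : ZMod k) (by rw [hvj1]; omega) (by rw [hvj1]; omega)
        rw [hb] at hCj
        exact key _ (by simpa using hEj) hCj hFj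
    have hlast : c ((k - 2 : ℕ) : ZMod k) = 0 := claim (k - 2) (by omega) le_rfl
    have hElast : c (((k - 2 : ℕ) : ZMod k) + 1) - c ((k - 2 : ℕ) : ZMod k) ≠
        (if (((k - 2 : ℕ)) : ZMod k).val = k - 2 then (0 : ZMod 5) else 1) := by
      simpa using hE ((k - 2 : ℕ) : ZMod k)
    rw [ZMod.val_natCast_of_lt (by omega), if_pos rfl, hlast] at hElast
    have hcast : (((k - 2 : ℕ) : ZMod k) + 1) = (-1 : ZMod k) := by
      have h1 : ((k : ℕ) : ZMod k) = 0 := ZMod.natCast_self k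
      have : ((k - 2 : ℕ) : ZMod k) = (k : ZMod k) - 2 := by
        push_cast [Nat.cast_sub (by omega : 2 ≤ k)]; ring
      rw [this, h1]; ring
    rw [hcast, ha] at hElast
    exact hElast (by ring)
end

section
/- Let G be a wheel with an even number n ≥ 6 of vertices (hub v plus odd cycle v₁⋯v_{n−1}). Then G is not (ℤ₅, 3)-extendable with respect to the path v_{n−1}v₁v₂: there exist φ: E(G) → ℤ₅, a proper precoloring of v_{n−1}, v₁, v₂, and forbidden sets of size at most two on the remaining outer vertices such that the precoloring does not extend. -/
/-- Let `G` be a wheel with an even number `n ≥ 6` of vertices: a hub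
together with the odd cycle `v₁ ⋯ v_{n−1}` (vertices `ZMod (n-1)`, `v₁ = 0`, `v₂ = 1`,
`v_{n−1} = -1`; edge `i — i+1` oriented by `o i` with label `φc i`, spoke at `i` oriented
by `os i` with label `φs i`).  Then `G` is not `(ℤ₅, 3)`-extendable with respect to the
path `v_{n−1} v₁ v₂`: there exist an orientation, labels `φ`, a precoloring `a, b, d` of
`v_{n−1}, v₁, v₂` proper on the path, and forbidden sets of size at most two on the
remaining outer vertices, such that the precoloring does not extend. -/
theorem stmt11 (n : ℕ) (hn : 6 ≤ n) (heven : Even n) :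
    ∃ (o : ZMod (n - 1) → Bool) (φc : ZMod (n - 1) → ZMod 5)
      (os : ZMod (n - 1) → Bool) (φs : ZMod (n - 1) → ZMod 5)
      (a b d : ZMod 5) (F : ZMod (n - 1) → Finset (ZMod 5)),
      (∀ i, (F i).card ≤ 2) ∧
      (if o (-1) then b - a ≠ φc (-1) else a - b ≠ φc (-1)) ∧
      (if o 0 then d - b ≠ φc 0 else b - d ≠ φc 0) ∧
      ¬ ∃ (c : ZMod (n - 1) → ZMod 5) (h : ZMod 5),
          c (-1) = a ∧ c 0 = b ∧ c 1 = d ∧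
          (∀ i, i ≠ -1 → i ≠ 0 → i ≠ 1 → c i ∉ F i) ∧
          (∀ i, if o i then c (i + 1) - c i ≠ φc i else c i - c (i + 1) ≠ φc i) ∧
          (∀ i, if os i then c i - h ≠ φs i else h - c i ≠ φs i) := by
  set m := n - 1 with hmdef
  have hm5 : 5 ≤ m := by omega
  obtain ⟨t, ht⟩ := heven
  have hmodd : m % 2 = 1 := by omega
  haveI : NeZero m := ⟨by omega⟩
  -- cast injectivity helper
  have hne : ∀ x y : ℕ, x < m → y < m → x ≠ y → (x : ZMod m) ≠ (y : ZMod m) := by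
    intro x y hx hy hxy hcast
    apply hxy
    rw [← ZMod.val_cast_of_lt hx, ← ZMod.val_cast_of_lt hy, hcast]
  have hneg : ((m - 1 : ℕ) : ZMod m) = -1 := by
    have h1 : ((m - 1 : ℕ) : ZMod m) + 1 = 0 := by
      have : (m - 1) + 1 = m := by omega
      rw [show (1 : ZMod m) = ((1 : ℕ) : ZMod m) by push_cast; ring, ← Nat.cast_add, this,
        ZMod.natCast_self]
    linear_combination h1
  have h0n : (0 : ZMod m) ≠ -1 := by
    rw [← hneg, show (0 : ZMod m) = ((0 : ℕ) : ZMod m) by push_cast; ring]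
    exact hne 0 (m - 1) (by omega) (by omega) (by omega)
  have h1n : (1 : ZMod m) ≠ -1 := by
    rw [← hneg, show (1 : ZMod m) = ((1 : ℕ) : ZMod m) by push_cast; ring]
    exact hne 1 (m - 1) (by omega) (by omega) (by omega)
  have h10 : (1 : ZMod m) ≠ 0 := by
    rw [show (1 : ZMod m) = ((1 : ℕ) : ZMod m) by push_cast; ring,
      show (0 : ZMod m) = ((0 : ℕ) : ZMod m) by push_cast; ring]
    exact hne 1 0 (by omega) (by omega) (by omega)
  refine ⟨(fun _ => true), (fun i => if i = -1 ∨ i = 0 then 1 else 0), (fun _ => true),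
    (fun i => if i = -1 then 0 else if i = 0 then 4 else 3), 0, 0, 0,
    (fun _ => ({3, 4} : Finset (ZMod 5))), ?_, ?_, ?_, ?_⟩
  · intro i
    show ({3, 4} : Finset (ZMod 5)).card ≤ 2
    decide
  · simp
    decide
  · simp [h0n.symm]
    decide
  · rintro ⟨c, h, hca, hcb, hcd, hF, hcyc, hsp⟩
    simp only [if_true] at hcyc hsp
    -- hub constraints from the three precolored vertices
    have hs1 : h ≠ 0 := by
      have := hsp (-1)
      rw [if_pos rfl, hca] at this
      intro hh; exact this (by rw [hh]; ring)
    have hs2 : h ≠ 1 := by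
      have := hsp 0
      rw [if_neg h0n, if_pos rfl, hcb] at this
      intro hh; exact this (by rw [hh]; decide)
    have hs3 : h ≠ 2 := by
      have := hsp 1
      rw [if_neg h1n, if_neg h10, hcd] at this
      intro hh; exact this (by rw [hh]; decide)
    have key : ∀ x : ZMod 5, x ≠ 0 → x ≠ 1 → x ≠ 2 → x = 3 ∨ x = 4 := by decide
    have hh : h = 3 ∨ h = 4 := key h hs1 hs2 hs3
    -- the alternating chain
    have key2 : ∀ h x : ZMod 5, (h = 3 ∨ h = 4) → x ≠ 3 → x ≠ 4 → x - h ≠ 3 →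
        (x ≠ 0 → x = -h) ∧ (x ≠ -h → x = 0) := by
      rintro h x (rfl | rfl) <;> revert x <;> decide
    have claim : ∀ k : ℕ, k ≤ m - 3 →
        c (1 + (k : ZMod m)) = if k % 2 = 0 then 0 else -h := by
      intro k
      induction k with
      | zero => intro _; simpa using hcd
      | succ k ih =>
        intro hk
        have ihk := ih (by omega)
        -- the vertex k+2
        have hv : (1 : ZMod m) + ((k + 1 : ℕ) : ZMod m) = ((k + 2 : ℕ) : ZMod m) := by
          push_cast; ring
        have hvn1 : ((k + 2 : ℕ) : ZMod m) ≠ -1 := by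
          rw [← hneg]; exact hne _ _ (by omega) (by omega) (by omega)
        have hvn0 : ((k + 2 : ℕ) : ZMod m) ≠ 0 := by
          rw [show (0 : ZMod m) = ((0 : ℕ) : ZMod m) by push_cast; ring]
          exact hne _ _ (by omega) (by omega) (by omega)
        have hvn2 : ((k + 2 : ℕ) : ZMod m) ≠ 1 := by
          rw [show (1 : ZMod m) = ((1 : ℕ) : ZMod m) by push_cast; ring]
          exact hne _ _ (by omega) (by omega) (by omega)
        -- the edge k+1
        have hen1 : ((k + 1 : ℕ) : ZMod m) ≠ -1 := by
          rw [← hneg]; exact hne _ _ (by omega) (by omega) (by omega)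
        have hen0 : ((k + 1 : ℕ) : ZMod m) ≠ 0 := by
          rw [show (0 : ZMod m) = ((0 : ℕ) : ZMod m) by push_cast; ring]
          exact hne _ _ (by omega) (by omega) (by omega)
        have hedge := hcyc ((k + 1 : ℕ) : ZMod m)
        rw [if_neg (by tauto : ¬(((k + 1 : ℕ) : ZMod m) = -1 ∨ ((k + 1 : ℕ) : ZMod m) = 0))]
          at hedge
        have he1 : ((k + 1 : ℕ) : ZMod m) + 1 = ((k + 2 : ℕ) : ZMod m) := by push_cast; ring
        have he0 : ((k + 1 : ℕ) : ZMod m) = (1 : ZMod m) + ((k : ℕ) : ZMod m) := by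
          push_cast; ring
        rw [he1, he0, ihk] at hedge
        have hFv := hF ((k + 2 : ℕ) : ZMod m) hvn1 hvn0 hvn2
        simp only [Finset.mem_insert, Finset.mem_singleton, not_or] at hFv
        have hspv := hsp ((k + 2 : ℕ) : ZMod m)
        rw [if_neg hvn1, if_neg hvn0] at hspv
        have hx := key2 h (c ((k + 2 : ℕ) : ZMod m)) hh hFv.1 hFv.2 hspv
        rw [hv]
        by_cases hpar : k % 2 = 0
        · rw [if_neg (by omega : ¬ (k + 1) % 2 = 0)]
          rw [if_pos hpar] at hedge
          exact hx.1 (fun hz => hedge (by rw [hz]; ring))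
        · rw [if_pos (by omega : (k + 1) % 2 = 0)]
          rw [if_neg hpar] at hedge
          exact hx.2 (fun hz => hedge (by rw [hz]; ring))
    -- final contradiction at the edge m-2 — m-1
    have hlast := claim (m - 3) (le_refl _)
    rw [if_pos (by omega : (m - 3) % 2 = 0)] at hlast
    have hv : (1 : ZMod m) + ((m - 3 : ℕ) : ZMod m) = ((m - 2 : ℕ) : ZMod m) := by
      rw [show (1 : ZMod m) = ((1 : ℕ) : ZMod m) by push_cast; ring, ← Nat.cast_add,
        show 1 + (m - 3) = m - 2 by omega]
    rw [hv] at hlast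
    have hen1 : ((m - 2 : ℕ) : ZMod m) ≠ -1 := by
      rw [← hneg]; exact hne _ _ (by omega) (by omega) (by omega)
    have hen0 : ((m - 2 : ℕ) : ZMod m) ≠ 0 := by
      rw [show (0 : ZMod m) = ((0 : ℕ) : ZMod m) by push_cast; ring]
      exact hne _ _ (by omega) (by omega) (by omega)
    have hedge := hcyc ((m - 2 : ℕ) : ZMod m)
    rw [if_neg (by tauto : ¬(((m - 2 : ℕ) : ZMod m) = -1 ∨ ((m - 2 : ℕ) : ZMod m) = 0))]
      at hedge
    have he1 : ((m - 2 : ℕ) : ZMod m) + 1 = -1 := by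
      rw [← hneg, ← Nat.cast_one, ← Nat.cast_add, show (m - 2) + 1 = m - 1 by omega]
    rw [he1, hca, hlast] at hedge
    exact hedge (by ring)
end

section
/- In every facial triangle of a generalized multi-wheel G with outer cycle C and major vertex v₁, at least one of the three triangle vertices lies on C − v₁ (i.e., is an outer-cycle vertex different from the major vertex). -/
variable {V : Type*} [DecidableEq V]

/-- Edges between consecutive elements of a list. -/
def pathEdges (l : List V) : Set (Sym2 V) :=
  {e | ∃ (i : ℕ) (a b : V), l[i]? = some a ∧ l[i + 1]? = some b ∧ e = s(a, b)}

/-- Edges of the cycle through a list: consecutive pairs plus the closing edge. -/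
def cycEdges (l : List V) : Set (Sym2 V) :=
  pathEdges l ∪ {e | ∃ a b, l.head? = some a ∧ l.getLast? = some b ∧ e = s(a, b)}

/-- A plane graph recorded with its outer cycle (listed starting at the major vertex),
its major vertex, and its set of (triangular) facial faces. -/
structure FramedGraph (V : Type*) where
  edges : Set (Sym2 V)
  outerCycle : List V
  major : V
  faces : Set (Finset V)

/-- The vertices of a framed graph: the endpoints of its edges. -/
def FramedGraph.verts (W : FramedGraph V) : Set V := {v | ∃ e ∈ W.edges, v ∈ e}

/-- Generalized wheels: broken wheels, wheels, and graphs obtained from two generalized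
wheels by identifying a principal edge of one with a principal edge of the other so that
the major vertices are identified. -/
inductive IsGenWheel : FramedGraph V → Prop
  /-- Broken wheel: outer cycle `v₁ :: rest` together with all chords from `v₁`;
  the facial triangles are `{v₁, vᵢ, vᵢ₊₁}`. -/
  | broken (v₁ : V) (rest : List V) (hnd : (v₁ :: rest).Nodup) (hlen : 2 ≤ rest.length) :
      IsGenWheel
        { edges := cycEdges (v₁ :: rest) ∪ {e | ∃ v ∈ rest, e = s(v₁, v)}
          outerCycle := v₁ :: rest
          major := v₁
          faces := {f | ∃ (i : ℕ) (a b : V), rest[i]? = some a ∧ rest[i + 1]? = some b ∧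
              f = {v₁, a, b}} }
  /-- Wheel: outer cycle `v₁ :: rest` together with a hub joined to all outer vertices;
  the facial triangles are `{hub, vᵢ, vᵢ₊₁}`. -/
  | wheel (v₁ : V) (rest : List V) (hub : V) (hnd : (v₁ :: rest).Nodup)
      (hlen : 2 ≤ rest.length) (hhub : hub ∉ v₁ :: rest) :
      IsGenWheel
        { edges := cycEdges (v₁ :: rest) ∪ {e | ∃ v ∈ v₁ :: rest, e = s(hub, v)}
          outerCycle := v₁ :: rest
          major := v₁
          faces := {f | ∃ a b, s(a, b) ∈ cycEdges (v₁ :: rest) ∧ f = {hub, a, b}} }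
  /-- Gluing: identify the principal edge `v₁v₂` of `G₁` with a principal edge of `G₂`
  so that the major vertices are identified (the two graphs meet exactly in `{v₁, v₂}`). -/
  | glue (G₁ G₂ : FramedGraph V) (h₁ : IsGenWheel G₁) (h₂ : IsGenWheel G₂)
      (v₁ v₂ : V) (rest₁ rest₂ : List V)
      (ho₁ : G₁.outerCycle = v₁ :: v₂ :: rest₁)
      (ho₂ : G₂.outerCycle = v₁ :: rest₂)
      (hlast : rest₂.getLast? = some v₂)
      (hmeet : G₁.verts ∩ G₂.verts = {v₁, v₂}) :
      IsGenWheel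
        { edges := G₁.edges ∪ G₂.edges
          outerCycle := v₁ :: (rest₂ ++ rest₁)
          major := v₁
          faces := G₁.faces ∪ G₂.faces }

/-- Generalized multi-wheels: generalized wheels, together with everything obtained from
a generalized multi-wheel by inserting a wheel into a facial triangle `x u y` where `xy`
is an outer edge not incident with the major vertex and `u` is an interior vertex: add a
new vertex `w` joined to `u, x, y`, replace the outer edge `xy` by a path
`x w₁ ⋯ w_j y` (`j ≥ 0`), and join each `wₗ` to `w`. -/
inductive IsGenMultiWheel : FramedGraph V → Prop
  | ofGenWheel (W : FramedGraph V) (h : IsGenWheel W) : IsGenMultiWheel W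
  | insertWheel (G : FramedGraph V) (hG : IsGenMultiWheel G)
      (x u y w : V) (ws : List V) (P Q : List V)
      (hface : ({x, u, y} : Finset V) ∈ G.faces)
      (houter : G.outerCycle = P ++ x :: y :: Q)
      (hx : x ≠ G.major) (hy : y ≠ G.major) (hu : u ∉ G.outerCycle)
      (hnew : ∀ z ∈ w :: ws, z ∉ G.verts)
      (hnd : (w :: ws).Nodup) :
      IsGenMultiWheel
        { edges := (G.edges \ {s(x, y)}) ∪ pathEdges (x :: (ws ++ [y]))
              ∪ {e | ∃ z ∈ x :: (ws ++ [y]), e = s(w, z)} ∪ {s(w, u)}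
          outerCycle := P ++ x :: (ws ++ y :: Q)
          major := G.major
          faces := (G.faces \ {({x, u, y} : Finset V)})
              ∪ {f | ∃ a b, s(a, b) ∈ pathEdges (x :: (ws ++ [y])) ∧ f = {w, a, b}}
              ∪ {({u, x, w} : Finset V), ({u, y, w} : Finset V)} }

lemma mem_of_getq {l : List V} {i : ℕ} {a : V} (h : l[i]? = some a) : a ∈ l := by
  obtain ⟨hi, rfl⟩ := List.getElem?_eq_some_iff.mp h
  exact List.getElem_mem _

lemma cyc_endpoint {v₁ : V} {rest : List V} {a b : V} (hne : rest ≠ [])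
    (h : s(a, b) ∈ cycEdges (v₁ :: rest)) : a ∈ rest ∨ b ∈ rest := by
  rcases h with ⟨i, c, d, hc, hd, hcd⟩ | ⟨c, d, hc, hd, hcd⟩
  · -- consecutive edge
    have hab : (a = c ∧ b = d) ∨ (a = d ∧ b = c) := by
      rw [Sym2.eq_iff] at hcd; tauto
    have hd' : d ∈ rest := by
      have : (v₁ :: rest)[i + 1]? = rest[i]? := by simp
      exact mem_of_getq (this ▸ hd)
    rcases hab with ⟨rfl, rfl⟩ | ⟨rfl, rfl⟩
    · right; exact hd'
    · left; exact hd'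
  · -- closing edge
    have hd' : d ∈ rest := by
      rw [show (v₁ :: rest).getLast? = rest.getLast? by
        cases rest with
        | nil => exact absurd rfl hne
        | cons b t => exact List.getLast?_cons_cons ..] at hd
      obtain ⟨h9, rfl⟩ := List.mem_getLast?_eq_getLast hd
      exact List.getLast_mem h9
    have hab : (a = c ∧ b = d) ∨ (a = d ∧ b = c) := by
      rw [Sym2.eq_iff] at hcd; tauto
    rcases hab with ⟨rfl, rfl⟩ | ⟨rfl, rfl⟩
    · right; exact hd'
    · left; exact hd'

lemma genWheel_aux (W : FramedGraph V) (h : IsGenWheel W) :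
    W.major ∈ W.verts ∧ W.outerCycle.head? = some W.major := by
  induction h with
  | broken v₁ rest hnd hlen =>
    refine ⟨⟨s(v₁, rest.head (by rintro rfl; simp at hlen)), ?_, ?_⟩, rfl⟩
    · right; exact ⟨_, List.head_mem _, rfl⟩
    · simp
  | wheel v₁ rest hub hnd hlen hhub =>
    exact ⟨⟨s(hub, v₁), Or.inr ⟨v₁, by simp⟩, by simp⟩, rfl⟩
  | glue G₁ G₂ h₁ h₂ v₁ v₂ rest₁ rest₂ ho₁ ho₂ hlast hmeet ih₁ ih₂ =>
    refine ⟨?_, rfl⟩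
    obtain ⟨hv, hh⟩ := ih₁
    rw [ho₁] at hh
    simp only [List.head?_cons, Option.some.injEq] at hh
    obtain ⟨e, he, hve⟩ := hv
    exact ⟨e, Or.inl he, hh ▸ hve⟩

lemma genWheel_stmt (W : FramedGraph V) (h : IsGenWheel W) :
    ∀ f ∈ W.faces, ∃ v ∈ f, v ∈ W.outerCycle ∧ v ≠ W.major := by
  induction h with
  | broken v₁ rest hnd hlen =>
    rintro f ⟨i, a, b, ha, hb, rfl⟩
    have ha' : a ∈ rest := mem_of_getq ha
    have hv₁ : v₁ ∉ rest := (List.nodup_cons.mp hnd).1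
    exact ⟨a, by simp, by simp [ha'], show a ≠ v₁ from fun h => hv₁ (h ▸ ha')⟩
  | wheel v₁ rest hub hnd hlen hhub =>
    rintro f ⟨a, b, hab, rfl⟩
    have hne : rest ≠ [] := by rintro rfl; simp at hlen
    have hv₁ : v₁ ∉ rest := (List.nodup_cons.mp hnd).1
    rcases cyc_endpoint hne hab with h | h
    · exact ⟨a, by simp, by simp [h], show a ≠ v₁ from fun hh => hv₁ (hh ▸ h)⟩
    · exact ⟨b, by simp, by simp [h], show b ≠ v₁ from fun hh => hv₁ (hh ▸ h)⟩
  | glue G₁ G₂ h₁ h₂ v₁ v₂ rest₁ rest₂ ho₁ ho₂ hlast hmeet ih₁ ih₂ =>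
    have hmaj₁ : G₁.major = v₁ := by
      have := (genWheel_aux G₁ h₁).2; rw [ho₁] at this; simpa using this.symm
    have hmaj₂ : G₂.major = v₁ := by
      have := (genWheel_aux G₂ h₂).2; rw [ho₂] at this; simpa using this.symm
    have hv₂ : v₂ ∈ rest₂ := by
      obtain ⟨h9, rfl⟩ := List.mem_getLast?_eq_getLast hlast
      exact List.getLast_mem h9
    rintro f (hf | hf)
    · obtain ⟨v, hvf, hvo, hvm⟩ := ih₁ f hf
      rw [ho₁] at hvo; rw [hmaj₁] at hvm
      refine ⟨v, hvf, ?_, hvm⟩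
      simp only [List.mem_cons, List.mem_append] at hvo ⊢
      rcases hvo with rfl | rfl | hv
      · exact absurd rfl hvm
      · exact Or.inr (Or.inl hv₂)
      · exact Or.inr (Or.inr hv)
    · obtain ⟨v, hvf, hvo, hvm⟩ := ih₂ f hf
      rw [ho₂] at hvo; rw [hmaj₂] at hvm
      refine ⟨v, hvf, ?_, hvm⟩
      simp only [List.mem_cons, List.mem_append] at hvo ⊢
      tauto

lemma multiWheel_major_mem_verts (W : FramedGraph V) (h : IsGenMultiWheel W) :
    W.major ∈ W.verts := by
  induction h with
  | ofGenWheel W hW => exact (genWheel_aux W hW).1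
  | insertWheel G hG x u y w ws P Q hface houter hx hy hu hnew hnd ih =>
    obtain ⟨e, he, hme⟩ := ih
    refine ⟨e, Or.inl (Or.inl (Or.inl ⟨he, ?_⟩)), hme⟩
    rintro rfl
    rw [Sym2.mem_iff] at hme
    rcases hme with rfl | rfl
    · exact hx rfl
    · exact hy rfl

/-- **Proposition 3.** In every facial triangle of a generalized
multi-wheel `W` with outer cycle `C` and major vertex `v₁`, at least one of the three
triangle vertices lies on `C − v₁`. -/
theorem stmt12 (W : FramedGraph V) (hW : IsGenMultiWheel W) :
    ∀ f ∈ W.faces, ∃ v ∈ f, v ∈ W.outerCycle ∧ v ≠ W.major := by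
  induction hW with
  | ofGenWheel W hW => exact genWheel_stmt W hW
  | insertWheel G hG x u y w ws P Q hface houter hx hy hu hnew hnd ih =>
    have hmv : G.major ∈ G.verts := multiWheel_major_mem_verts G hG
    have hxo : x ∈ P ++ x :: (ws ++ y :: Q) := by simp
    have hyo : y ∈ P ++ x :: (ws ++ y :: Q) := by simp
    have hmem : ∀ z ∈ x :: (ws ++ [y]), z ∈ P ++ x :: (ws ++ y :: Q) ∧ z ≠ G.major := by
      intro z hz
      simp only [List.mem_cons, List.mem_append, List.mem_singleton, List.not_mem_nil, or_false] at hz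
      rcases hz with rfl | hz | rfl
      · exact ⟨hxo, hx⟩
      · refine ⟨by simp [hz], ?_⟩
        rintro rfl
        exact hnew G.major (by simp [hz]) hmv
      · exact ⟨hyo, hy⟩
    rintro f ((⟨hf, hfne⟩ | ⟨a, b, hab, rfl⟩) | hf)
    · obtain ⟨v, hvf, hvo, hvm⟩ := ih f hf
      refine ⟨v, hvf, ?_, hvm⟩
      rw [houter] at hvo
      simp only [List.mem_append, List.mem_cons] at hvo ⊢
      tauto
    · obtain ⟨i, c, d, hc, hd, hcd⟩ := hab
      have hc' : c ∈ x :: (ws ++ [y]) := mem_of_getq hc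
      obtain ⟨h1, h2⟩ := hmem c hc'
      rw [Sym2.eq_iff] at hcd
      rcases hcd with ⟨rfl, rfl⟩ | ⟨rfl, rfl⟩
      · exact ⟨a, by simp, h1, h2⟩
      · exact ⟨b, by simp, h1, h2⟩
    · simp only [Set.mem_insert_iff, Set.mem_singleton_iff] at hf
      rcases hf with rfl | rfl
      · exact ⟨x, by simp, hxo, hx⟩
      · exact ⟨y, by simp, hyo, hy⟩
end
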